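/- Let R be an ℕ-graded locally finite K-algebra, Λ ⊆ R a graded reductor (so K·Λ = R), and S an Ore set in R. Then S' = (K^× · S) ∩ Λ is an Ore set in Λ and the localization (S')^{-1}Λ is isomorphic to S^{-1}R. -/

import Mathlib

/-! Λ contains a `K`-basis of every graded piece, so it spans `R`; by induction on a spanning
combination, the scalars `k` with `k • r ∈ Λ` contain a whole ball `{k | γ ≤ v k}`, and any
two elements of `R` have a common nonzero denominator in `K`. Multiplying an Ore identity or a
fraction of `R` through by such a scalar moves it into `Λ`, and nonzero scalars are units in
`S⁻¹R`. -/

/-- The additive subgroup `(f_γ^vK)·S` of a `K`-algebra `R` generated by products `c·s`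
with `c ∈ f_γ^vK = {c ∈ K : v c ≥ -γ}` and `s ∈ S`. -/
def scaledSet {K : Type*} (R : Type*) {Γ : Type*} [Field K] [Ring R] [Algebra K R]
    [AddCommGroup Γ] [LinearOrder Γ] [IsOrderedAddMonoid Γ] (v : K → WithTop Γ) (γ : Γ) (S : Set R) : AddSubgroup R :=
  AddSubgroup.closure {a | ∃ c : K, ∃ s ∈ S, ((-γ : Γ) : WithTop Γ) ≤ v c ∧
    a = algebraMap K R c * s}

/-- `S' = (K^× · S) ∩ Λ`. -/
def oreInter (K : Type*) {R : Type*} [Field K] [Ring R] [Algebra K R]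
    (Λ : Subring R) (S : Submonoid R) : Set R :=
  {x : R | x ∈ Λ ∧ ∃ k : K, k ≠ 0 ∧ ∃ s ∈ S, x = algebraMap K R k * s}

open OreLocalization

section Scaling

variable {K R Γ : Type*} [Field K] [Ring R] [Algebra K R]
  [AddCommGroup Γ] [LinearOrder Γ] [IsOrderedAddMonoid Γ] {v : K → WithTop Γ} {Λ : Subring R}

theorem Submodule.eq_top_of_forall_le_of_decomposition {ι : Type*} [DecidableEq ι]
    (𝒜 : ι → Submodule K R) [DirectSum.Decomposition 𝒜] {p : Submodule K R}
    (h : ∀ i, 𝒜 i ≤ p) : p = ⊤ :=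
  top_le_iff.mp <| (DirectSum.Decomposition.isInternal 𝒜).submodule_iSup_eq_top ▸ iSup_le h

theorem exists_forall_le_smul_mem_of_mem_span (hmul : ∀ x y : K, v (x * y) = v x + v y)
    (hΛK : ∀ x : K, 0 ≤ v x → algebraMap K R x ∈ Λ) {r : R}
    (hr : r ∈ Submodule.span K (Λ : Set R)) :
    ∃ γ : Γ, ∀ k : K, (γ : WithTop Γ) ≤ v k → k • r ∈ Λ := by
  induction hr using Submodule.span_induction with
  | mem x hx =>
    exact ⟨0, fun k hk => by rw [Algebra.smul_def]; exact Λ.mul_mem (hΛK k hk) hx⟩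
  | zero => exact ⟨0, fun k _ => by rw [smul_zero]; exact Λ.zero_mem⟩
  | add x y _ _ hx hy =>
    obtain ⟨γ₁, h₁⟩ := hx
    obtain ⟨γ₂, h₂⟩ := hy
    refine ⟨max γ₁ γ₂, fun k hk => ?_⟩
    rw [smul_add]
    exact Λ.add_mem (h₁ k (le_trans (by simp) hk)) (h₂ k (le_trans (by simp) hk))
  | smul c x _ hx =>
    obtain ⟨γ, h⟩ := hx
    cases hc : v c with
    | top => exact ⟨γ, fun k _ => by rw [smul_smul]; apply h; simp [hmul, hc]⟩
    | coe δ =>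
      refine ⟨γ - δ, fun k hk => ?_⟩
      rw [smul_smul]
      apply h
      calc (γ : WithTop Γ) = ((γ - δ : Γ) : WithTop Γ) + δ := by
            rw [← WithTop.coe_add, sub_add_cancel]
        _ ≤ v k + δ := by gcongr
        _ = v (k * c) := by rw [hmul, hc]

theorem exists_ne_zero_smul_mem_of_span_eq_top (hv0 : v 0 = ⊤)
    (hmul : ∀ x y : K, v (x * y) = v x + v y)
    (hsurj : ∀ γ : Γ, ∃ x : K, v x = (γ : WithTop Γ))
    (hΛK : ∀ x : K, 0 ≤ v x → algebraMap K R x ∈ Λ)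
    (hspan : Submodule.span K (Λ : Set R) = ⊤) (r₁ r₂ : R) :
    ∃ k : K, k ≠ 0 ∧ k • r₁ ∈ Λ ∧ k • r₂ ∈ Λ := by
  obtain ⟨γ₁, h₁⟩ := exists_forall_le_smul_mem_of_mem_span hmul hΛK (by simp [hspan])
  obtain ⟨γ₂, h₂⟩ := exists_forall_le_smul_mem_of_mem_span hmul hΛK (by simp [hspan])
  obtain ⟨k, hk⟩ := hsurj (max γ₁ γ₂)
  refine ⟨k, ?_, h₁ k (hk ▸ by simp), h₂ k (hk ▸ by simp)⟩
  rintro rfl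
  exact WithTop.coe_ne_top (hk.symm.trans hv0)

end Scaling

section OreInter

variable {K R : Type*} [Field K] [Ring R] [Algebra K R] {Λ : Subring R} {S : Submonoid R}

theorem smul_mem_oreInter {k : K} (hk : k ≠ 0) {s : R} (hs : s ∈ S) (h : k • s ∈ Λ) :
    k • s ∈ oreInter K Λ S :=
  ⟨h, k, hk, s, hs, Algebra.smul_def k s⟩

theorem one_mem_oreInter : (1 : R) ∈ oreInter K Λ S :=
  one_smul K (1 : R) ▸ smul_mem_oreInter one_ne_zero S.one_mem (by simp)

theorem mul_mem_oreInter {x y : R} (hx : x ∈ oreInter K Λ S) (hy : y ∈ oreInter K Λ S) :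
    x * y ∈ oreInter K Λ S := by
  obtain ⟨hxΛ, c, hc, s, hs, rfl⟩ := hx
  obtain ⟨hyΛ, d, hd, t, ht, rfl⟩ := hy
  refine ⟨Λ.mul_mem hxΛ hyΛ, c * d, mul_ne_zero hc hd, s * t, S.mul_mem hs ht, ?_⟩
  simp only [← Algebra.smul_def, smul_mul_smul_comm, mul_comm c d]

theorem isUnit_numeratorRingHom_of_mem_oreInter [OreSet S] {s : R} (hs : s ∈ oreInter K Λ S) :
    IsUnit (numeratorRingHom (S := S) s) := by
  obtain ⟨-, c, hc, t, ht, rfl⟩ := hs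
  rw [map_mul]
  exact ((IsUnit.mk0 c hc).map (algebraMap K R)).map _ |>.mul (numerator_isUnit ⟨t, ht⟩)

theorem exists_oreInter_mul_eq_mul [OreSet S]
    (hden : ∀ r₁ r₂ : R, ∃ k : K, k ≠ 0 ∧ k • r₁ ∈ Λ ∧ k • r₂ ∈ Λ) (a : R) {s : R}
    (hs : s ∈ oreInter K Λ S) :
    ∃ a' ∈ Λ, ∃ s' ∈ oreInter K Λ S, s' * a = a' * s := by
  obtain ⟨-, c, hc, t, ht, rfl⟩ := hs
  obtain ⟨k, hk, hkt, hka⟩ := hden (oreDenom a ⟨t, ht⟩) (c⁻¹ • oreNum a ⟨t, ht⟩)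
  refine ⟨_, hka, _, smul_mem_oreInter hk (oreDenom a ⟨t, ht⟩).2 hkt, ?_⟩
  rw [← Algebra.smul_def, smul_mul_assoc, ore_eq, smul_mul_smul_comm, smul_mul_assoc, smul_smul,
    mul_assoc, mul_inv_cancel₀ hc, mul_one]

theorem exists_oreInter_mul_eq_numeratorRingHom [OreSet S]
    (hden : ∀ r₁ r₂ : R, ∃ k : K, k ≠ 0 ∧ k • r₁ ∈ Λ ∧ k • r₂ ∈ Λ) (q : R[S⁻¹]) :
    ∃ a ∈ Λ, ∃ s ∈ oreInter K Λ S,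
      numeratorRingHom (S := S) s * q = numeratorRingHom (S := S) a := by
  induction q using OreLocalization.ind with
  | _ r t =>
    obtain ⟨k, hk, hkr, hkt⟩ := hden r t
    refine ⟨k • r, hkr, k • (t : R), smul_mem_oreInter hk t.2 hkt, ?_⟩
    rw [Algebra.smul_def, Algebra.smul_def, map_mul, map_mul, mul_assoc]
    congr 1
    change numeratorHom (t : R) * (r /ₒ t) = numeratorHom r
    rw [numeratorHom_apply, numeratorHom_apply, OreLocalization.mul_cancel]

end OreInter

theorem stmt17_general {K R Γ : Type*} [Field K] [Ring R] [Algebra K R]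
    [AddCommGroup Γ] [LinearOrder Γ] [IsOrderedAddMonoid Γ]
    (v : K → WithTop Γ)
    (h0 : ∀ x : K, v x = ⊤ ↔ x = 0)
    (hmul : ∀ x y : K, v (x * y) = v x + v y)
    (hsurj : ∀ γ : Γ, ∃ x : K, v x = (γ : WithTop Γ))
    (𝒜 : ℕ → Submodule K R) [GradedRing 𝒜]
    (Λ : Subring R)
    (hΛK : ∀ x : K, algebraMap K R x ∈ Λ ↔ (0 : WithTop Γ) ≤ v x)
    (hlat : ∀ n : ℕ,
      (∃ s : Set R, s ⊆ (Λ : Set R) ∩ (𝒜 n : Set R) ∧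
        LinearIndependent K ((↑) : s → R) ∧ Submodule.span K s = 𝒜 n) ∧
      (∃ t : Finset R, (↑t : Set R) ⊆ (𝒜 n : Set R) ∧
        (Λ : Set R) ∩ (𝒜 n : Set R) ⊆ (scaledSet R v 0 (↑t : Set R) : Set R)))
    (S : Submonoid R) [OreLocalization.OreSet S] :
    ((1 : R) ∈ oreInter K Λ S) ∧
    (∀ x ∈ oreInter K Λ S, ∀ y ∈ oreInter K Λ S, x * y ∈ oreInter K Λ S) ∧
    (∀ a ∈ Λ, ∀ s ∈ oreInter K Λ S,
      ∃ a' ∈ Λ, ∃ s' ∈ oreInter K Λ S, s' * a = a' * s) ∧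
    (∀ s ∈ oreInter K Λ S, IsUnit (OreLocalization.numeratorRingHom (S := S) s)) ∧
    (∀ q : R[S⁻¹], ∃ a ∈ Λ, ∃ s ∈ oreInter K Λ S,
      (OreLocalization.numeratorRingHom (S := S) s) * q =
        OreLocalization.numeratorRingHom (S := S) a) := by
  have hspan : Submodule.span K (Λ : Set R) = ⊤ := by
    refine Submodule.eq_top_of_forall_le_of_decomposition 𝒜 fun n => ?_
    obtain ⟨⟨s, hsΛ, -, hs⟩, -⟩ := hlat n
    exact hs ▸ Submodule.span_mono fun x hx => (hsΛ hx).1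
  have hden := exists_ne_zero_smul_mem_of_span_eq_top ((h0 0).mpr rfl) hmul hsurj
    (fun x hx => (hΛK x).mpr hx) hspan
  exact ⟨one_mem_oreInter, fun x hx y hy => mul_mem_oreInter hx hy,
    fun a _ s hs => exists_oreInter_mul_eq_mul hden a hs,
    fun s hs => isUnit_numeratorRingHom_of_mem_oreInter hs,
    exists_oreInter_mul_eq_numeratorRingHom hden⟩

/-- Let `R` be an `ℕ`-graded locally finite `K`-algebra, `Λ ⊆ R` a graded reductor
(so `K·Λ = R`), and `S` a (left) Ore set in `R`.  Then `S' = (K^×·S) ∩ Λ` is an Ore set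
in `Λ` (multiplicatively closed, satisfying the left Ore condition in `Λ`) and
`(S')⁻¹Λ ≅ S⁻¹R`: every element of `S'` becomes a unit in `S⁻¹R = R[S⁻¹]` and every
element of `S⁻¹R` is a left fraction of an element of `Λ` by an element of `S'`. -/
theorem stmt17 {K R Γ : Type*} [Field K] [Ring R] [Algebra K R]
    [AddCommGroup Γ] [LinearOrder Γ] [IsOrderedAddMonoid Γ]
    (v : K → WithTop Γ)
    (h0 : ∀ x : K, v x = ⊤ ↔ x = 0)
    (hmul : ∀ x y : K, v (x * y) = v x + v y)
    (hadd : ∀ x y : K, min (v x) (v y) ≤ v (x + y))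
    (hsurj : ∀ γ : Γ, ∃ x : K, v x = (γ : WithTop Γ))
    (𝒜 : ℕ → Submodule K R) [GradedRing 𝒜]
    (hfin : ∀ n : ℕ, FiniteDimensional K (𝒜 n))
    (Λ : Subring R)
    (hΛgr : ∀ x ∈ Λ, ∀ n : ℕ, (DirectSum.decompose 𝒜 x n : R) ∈ Λ)
    (hΛK : ∀ x : K, algebraMap K R x ∈ Λ ↔ (0 : WithTop Γ) ≤ v x)
    (hlat : ∀ n : ℕ,
      (∃ s : Set R, s ⊆ (Λ : Set R) ∩ (𝒜 n : Set R) ∧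
        LinearIndependent K ((↑) : s → R) ∧ Submodule.span K s = 𝒜 n) ∧
      (∃ t : Finset R, (↑t : Set R) ⊆ (𝒜 n : Set R) ∧
        (Λ : Set R) ∩ (𝒜 n : Set R) ⊆ (scaledSet R v 0 (↑t : Set R) : Set R)))
    (S : Submonoid R) [OreLocalization.OreSet S] :
    ((1 : R) ∈ oreInter K Λ S) ∧
    (∀ x ∈ oreInter K Λ S, ∀ y ∈ oreInter K Λ S, x * y ∈ oreInter K Λ S) ∧
    (∀ a ∈ Λ, ∀ s ∈ oreInter K Λ S,
      ∃ a' ∈ Λ, ∃ s' ∈ oreInter K Λ S, s' * a = a' * s) ∧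
    (∀ s ∈ oreInter K Λ S, IsUnit (OreLocalization.numeratorRingHom (S := S) s)) ∧
    (∀ q : R[S⁻¹], ∃ a ∈ Λ, ∃ s ∈ oreInter K Λ S,
      (OreLocalization.numeratorRingHom (S := S) s) * q =
        OreLocalization.numeratorRingHom (S := S) a) :=
  stmt17_general v h0 hmul hsurj 𝒜 Λ hΛK hlat S
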